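/- Strong completeness of S4_NES and S5_NES: S4_NES is strongly complete with respect to the class of reflexive and transitive frames, and S5_NES is strongly complete with respect to the class of frames with equivalence relations; that is, every S4_NES-consistent set of L_NES-formulas is satisfiable in some pointed S4 model, and every S5_NES-consistent set of L_NES-formulas is satisfiable in some pointed S5 model. -/

import Mathlib

/-- Terms of the language L_NES: `g ::= A | K_i g | ¬g`. -/
inductive NesTerm (U I : Type) : Type
  | base : U → NesTerm U I
  | know : I → NesTerm U I → NesTerm U I
  | neg  : NesTerm U I → NesTerm U I

/-- Formulas of L_NES: `All g1 are g2` and `Some g1 is g2`. -/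
inductive NesForm (U I : Type) : Type
  | all : NesTerm U I → NesTerm U I → NesForm U I
  | ex  : NesTerm U I → NesTerm U I → NesForm U I

/-- The (defined) negation of an L_NES formula. -/
def NesForm.negf {U I : Type} : NesForm U I → NesForm U I
  | .all g1 g2 => .ex g1 (.neg g2)
  | .ex g1 g2 => .all g1 (.neg g2)

/-- Derivability in T_NES augmented with a set `extra` of additional axioms
(`extra = ∅` gives T_NES itself). -/
inductive NesDer {U I : Type} (extra : Set (NesForm U I)) :
    Set (NesForm U I) → NesForm U I → Prop
  | prem {Γ φ} : φ ∈ Γ → NesDer extra Γ φ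
  | extraAx {Γ φ} : φ ∈ extra → NesDer extra Γ φ
  | allSelf {Γ} (g : NesTerm U I) : NesDer extra Γ (.all g g)
  | tAx {Γ} (i : I) (g : NesTerm U I) : NesDer extra Γ (.all (.know i g) g)
  | dni {Γ} (g : NesTerm U I) : NesDer extra Γ (.all g (.neg (.neg g)))
  | dne {Γ} (g : NesTerm U I) : NesDer extra Γ (.all (.neg (.neg g)) g)
  | barbara {Γ g1 g2 g3} : NesDer extra Γ (.all g1 g2) → NesDer extra Γ (.all g2 g3) →
      NesDer extra Γ (.all g1 g3)
  | conv {Γ g1 g2} : NesDer extra Γ (.ex g1 g2) → NesDer extra Γ (.ex g2 g1)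
  | exist {Γ g1 g2} : NesDer extra Γ (.ex g1 g2) → NesDer extra Γ (.ex g1 g1)
  | nonEmpty {Γ g} : NesDer extra Γ (.all g (.neg g)) →
      NesDer extra Γ (.ex (.neg g) (.neg g))
  | raa {Γ φ ψ} : NesDer extra (insert φ Γ) ψ → NesDer extra (insert φ Γ) ψ.negf →
      NesDer extra Γ φ.negf
  | kRule {Γ g1 g2} (i : I) : NesDer extra (∅ : Set (NesForm U I)) (.all g1 g2) →
      NesDer extra Γ (.all (.know i g1) (.know i g2))

/-- Derivability in the system T_NES. -/
def TNes {U I : Type} : Set (NesForm U I) → NesForm U I → Prop := NesDer ∅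

/-- The extra axioms of S4_NES: `All K_i g are K_i K_i g`. -/
def S4Extra (U I : Type) : Set (NesForm U I) :=
  {φ | ∃ (i : I) (g : NesTerm U I), φ = .all (.know i g) (.know i (.know i g))}

/-- The extra axioms of S5_NES: those of S4_NES plus `All ¬K_i g are K_i ¬K_i g`. -/
def S5Extra (U I : Type) : Set (NesForm U I) :=
  S4Extra U I ∪ {φ | ∃ (i : I) (g : NesTerm U I),
    φ = .all (.neg (.know i g)) (.know i (.neg (.know i g)))}

/-- Derivability in the system S4_NES. -/
def S4Nes {U I : Type} : Set (NesForm U I) → NesForm U I → Prop := NesDer (S4Extra U I)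

/-- Derivability in the system S5_NES. -/
def S5Nes {U I : Type} : Set (NesForm U I) → NesForm U I → Prop := NesDer (S5Extra U I)

/-- A first-order Kripke model for L_NES with constant (nonempty) domain. -/
structure NesModel (U I : Type) where
  W : Type
  R : I → W → W → Prop
  D : Type
  dNonempty : Nonempty D
  val : W → U → Set D

/-- Interpretation of terms: `ρ⁺_w(A) = ρ_w(A)`, `ρ⁺_w(¬g) = D − ρ⁺_w(g)`,
`ρ⁺_w(K_i g) = ⋂_{w R_i v} ρ⁺_v(g)`. -/
def NesModel.interp {U I : Type} (M : NesModel U I) : M.W → NesTerm U I → Set M.D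
  | w, .base A => M.val w A
  | w, .know i g => {d | ∀ v, M.R i w v → d ∈ NesModel.interp M v g}
  | w, .neg g => (NesModel.interp M w g)ᶜ

/-- Satisfaction of L_NES formulas at a pointed model. -/
def NesModel.sat {U I : Type} (M : NesModel U I) (w : M.W) : NesForm U I → Prop
  | .all g1 g2 => M.interp w g1 ⊆ M.interp w g2
  | .ex g1 g2 => (M.interp w g1 ∩ M.interp w g2).Nonempty

/-- A pointed model satisfies a set of formulas. -/
def NesModel.satSet {U I : Type} (M : NesModel U I) (w : M.W)
    (Γ : Set (NesForm U I)) : Prop :=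
  ∀ φ ∈ Γ, M.sat w φ

/-- T models: every accessibility relation is reflexive. -/
def NesModel.IsT {U I : Type} (M : NesModel U I) : Prop := ∀ i, Reflexive (M.R i)

/-- S4 models: every accessibility relation is reflexive and transitive. -/
def NesModel.IsS4 {U I : Type} (M : NesModel U I) : Prop :=
  ∀ i, Reflexive (M.R i) ∧ Transitive (M.R i)

/-- S5 models: every accessibility relation is an equivalence relation. -/
def NesModel.IsS5 {U I : Type} (M : NesModel U I) : Prop := ∀ i, Equivalence (M.R i)

/-- A set of L_NES formulas is consistent (in the system with extra axioms `extra`)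
if no formula and its negation are both derivable from it. -/
def ConsistentIn {U I : Type} (extra : Set (NesForm U I)) (Γ : Set (NesForm U I)) : Prop :=
  ¬ ∃ ψ : NesForm U I, NesDer extra Γ ψ ∧ NesDer extra Γ ψ.negf

/-- Consistency in T_NES. -/
def Consistent {U I : Type} (Γ : Set (NesForm U I)) : Prop :=
  ConsistentIn ∅ Γ

namespace NesCompleteness

open NesTerm NesForm

attribute [local instance] Classical.propDecidable

variable {U I : Type}

/-! ### Weakening -/

theorem derWeaken {e Γ Γ' : Set (NesForm U I)} {φ : NesForm U I}
    (h : NesDer e Γ φ) (hs : Γ ⊆ Γ') : NesDer e Γ' φ := by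
  induction h generalizing Γ' with
  | prem h => exact .prem (hs h)
  | extraAx h => exact .extraAx h
  | allSelf g => exact .allSelf g
  | tAx i g => exact .tAx i g
  | dni g => exact .dni g
  | dne g => exact .dne g
  | barbara _ _ ih1 ih2 => exact .barbara (ih1 hs) (ih2 hs)
  | conv _ ih => exact .conv (ih hs)
  | exist _ ih => exact .exist (ih hs)
  | nonEmpty _ ih => exact .nonEmpty (ih hs)
  | raa _ _ ih1 ih2 =>
      exact .raa (ih1 (Set.insert_subset_insert hs)) (ih2 (Set.insert_subset_insert hs))
  | kRule i h => exact .kRule i h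

/-! ### Derived syntactic facts -/

/-- `a` is provably included in `b` (from premises `Θ`, extra axioms `e`). -/
def Le (e Θ : Set (NesForm U I)) (a b : NesTerm U I) : Prop := NesDer e Θ (.all a b)

namespace Le

variable {e Θ : Set (NesForm U I)} {a b c t : NesTerm U I}

theorem rfl' : Le e Θ a a := .allSelf a

theorem trans' (h1 : Le e Θ a b) (h2 : Le e Θ b c) : Le e Θ a c := .barbara h1 h2

theorem dni' : Le e Θ a (.neg (.neg a)) := .dni a

theorem dne' : Le e Θ (.neg (.neg a)) a := .dne a

/-- Contraposition. -/
theorem contra (h : Le e Θ a b) : Le e Θ (.neg b) (.neg a) := by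
  have h1 : NesDer e (insert (NesForm.ex (.neg b) a) Θ) (NesForm.ex a (.neg b)) :=
    .conv (.prem (Set.mem_insert _ _))
  have h2 : NesDer e (insert (NesForm.ex (.neg b) a) Θ) (NesForm.all a (.neg (.neg b))) :=
    .barbara (derWeaken h (Set.subset_insert _ _)) (.dni b)
  exact NesDer.raa h1 h2

/-- If `a ≤ t` and `a ≤ ¬t` then `a ≤ ¬a`. -/
theorem self_neg (h1 : Le e Θ a t) (h2 : Le e Θ a (.neg t)) : Le e Θ a (.neg a) :=
  trans' h1 (trans' dni' (contra h2))

theorem kmono {Γ : Set (NesForm U I)} (i : I) (h : Le e ∅ a b) :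
    Le e Γ (.know i a) (.know i b) := .kRule i h

end Le

/-- From `h ≤ ¬h` and `¬h ≤ h` inconsistency follows. -/
theorem not_consistent_of_le {e Θ : Set (NesForm U I)} {h : NesTerm U I}
    (h1 : Le e Θ h (.neg h)) (h2 : Le e Θ (.neg h) h) (hc : ConsistentIn e Θ) : False :=
  hc ⟨.ex (.neg h) (.neg h), .nonEmpty h1,
    show NesDer e Θ (.all (.neg h) (.neg (.neg h))) from .barbara h2 (.dni h)⟩

theorem consistent_mono {e Γ Γ' : Set (NesForm U I)} (hs : Γ' ⊆ Γ)
    (hc : ConsistentIn e Γ) : ConsistentIn e Γ' := by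
  rintro ⟨ψ, d1, d2⟩
  exact hc ⟨ψ, derWeaken d1 hs, derWeaken d2 hs⟩

/-! ### Boolean soundness -/

def tv : NesTerm U I → Bool
  | .base _ => true
  | .know _ g => tv g
  | .neg g => !(tv g)

def tvSat : NesForm U I → Prop
  | .all g1 g2 => tv g1 = tv g2
  | .ex g1 g2 => tv g1 = tv g2

theorem tvSat_negf_iff (φ : NesForm U I) : tvSat φ.negf ↔ ¬ tvSat φ := by
  cases φ with
  | all g1 g2 =>
      show (tv g1 = !(tv g2)) ↔ ¬ (tv g1 = tv g2)
      cases (tv g1) <;> cases (tv g2) <;> simp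
  | ex g1 g2 =>
      show (tv g1 = !(tv g2)) ↔ ¬ (tv g1 = tv g2)
      cases (tv g1) <;> cases (tv g2) <;> simp

theorem tv_sound {e Γ : Set (NesForm U I)} {φ : NesForm U I}
    (he : ∀ ψ ∈ e, tvSat ψ) (h : NesDer e Γ φ) (hΓ : ∀ ψ ∈ Γ, tvSat ψ) : tvSat φ := by
  induction h with
  | prem h => exact hΓ _ h
  | extraAx h => exact he _ h
  | allSelf g => exact Eq.refl _
  | tAx i g => exact Eq.refl _
  | dni g => show tv g = !(!(tv g)); simp
  | dne g => show (!(!(tv g))) = tv g; simp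
  | barbara _ _ ih1 ih2 => exact (ih1 hΓ).trans (ih2 hΓ)
  | conv _ ih => exact (ih hΓ).symm
  | exist _ ih => exact Eq.refl _
  | nonEmpty h ih =>
      rename_i Γ' g
      have := ih hΓ
      have : tv g = !(tv g) := this
      exact absurd this (by cases h' : tv g <;> simp [h'])
  | raa _ _ ih1 ih2 =>
      rename_i Γ' φ' ψ' _ _
      by_cases hφ : tvSat φ'
      · have hins : ∀ χ ∈ insert φ' Γ', tvSat χ := by
          intro χ hχ
          rcases hχ with h | h
          · exact h ▸ hφ
          · exact hΓ _ h
        exact absurd (ih1 hins) ((tvSat_negf_iff ψ').mp (ih2 hins))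
      · exact (tvSat_negf_iff φ').mpr hφ
  | kRule i h ih =>
      exact ih (by simp)

end NesCompleteness
namespace NesCompleteness

open NesTerm NesForm

variable {U I : Type}

/-! ### Points (saturated term sets) -/

def Clash (S : Set (NesTerm U I)) : Prop := ∃ t, t ∈ S ∧ NesTerm.neg t ∈ S

def ClosedLe (e Θ : Set (NesForm U I)) (S : Set (NesTerm U I)) : Prop :=
  ∀ a b, a ∈ S → Le e Θ a b → b ∈ S

def OKSet (e Θ : Set (NesForm U I)) (S : Set (NesTerm U I)) : Prop :=
  ClosedLe e Θ S ∧ ¬ Clash S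

def IsPoint (e Θ : Set (NesForm U I)) (S : Set (NesTerm U I)) : Prop :=
  ClosedLe e Θ S ∧ ¬ Clash S ∧ ∀ h, h ∈ S ∨ NesTerm.neg h ∈ S

theorem IsPoint.mem_neg_iff {e Θ : Set (NesForm U I)} {S : Set (NesTerm U I)}
    (hS : IsPoint e Θ S) (g : NesTerm U I) : NesTerm.neg g ∈ S ↔ g ∉ S := by
  constructor
  · intro hn hg
    exact hS.2.1 ⟨g, hg, hn⟩
  · intro hg
    rcases hS.2.2 g with h | h
    · exact absurd h hg
    · exact h

theorem IsPoint.mono {e Θ : Set (NesForm U I)} {S : Set (NesTerm U I)}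
    (hS : IsPoint e Θ S) : IsPoint e ∅ S :=
  ⟨fun a b ha hle => hS.1 a b ha (derWeaken hle (Set.empty_subset Θ)), hS.2⟩

/-- The Lindenbaum-type extension lemma for term sets. -/
theorem exists_point {e Θ : Set (NesForm U I)} (hΘ : ConsistentIn e Θ)
    {C : Set (NesTerm U I)} (hC : OKSet e Θ C) :
    ∃ M, C ⊆ M ∧ IsPoint e Θ M := by
  obtain ⟨m, hCm, hm⟩ := zorn_subset_nonempty {X | OKSet e Θ X} (fun c hc hchain hne => by
      refine ⟨⋃₀ c, ⟨?_, ?_⟩, fun s hs => Set.subset_sUnion_of_mem hs⟩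
      · rintro a b ⟨X, hX, haX⟩ hab
        exact ⟨X, hX, (hc hX).1 a b haX hab⟩
      · rintro ⟨t, ⟨X, hX, htX⟩, ⟨Y, hY, hnY⟩⟩
        rcases hchain.total hX hY with hXY | hYX
        · exact (hc hY).2 ⟨t, hXY htX, hnY⟩
        · exact (hc hX).2 ⟨t, htX, hYX hnY⟩) C hC
  refine ⟨m, hCm, hm.prop.1, hm.prop.2, ?_⟩
  intro h
  by_contra hcon
  push_neg at hcon
  obtain ⟨hh, hnh⟩ := hcon
  -- analyze the closure of m ∪ {t | h ≤ t}
  have key : ∀ x : NesTerm U I, x ∉ m →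
      (∃ t, (t ∈ m ∨ Le e Θ x t) ∧ (NesTerm.neg t ∈ m ∨ Le e Θ x (NesTerm.neg t))) := by
    intro x hx
    set M1 : Set (NesTerm U I) := m ∪ {t | Le e Θ x t} with hM1
    have hclosed : ClosedLe e Θ M1 := by
      rintro a b (ha | ha) hab
      · exact Or.inl (hm.prop.1 a b ha hab)
      · exact Or.inr (Le.trans' ha hab)
    have hclash : Clash M1 := by
      by_contra hncl
      have : M1 ⊆ m := hm.le_of_ge ⟨hclosed, hncl⟩ Set.subset_union_left
      exact hx (this (Or.inr Le.rfl'))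
    obtain ⟨t, ht, hnt⟩ := hclash
    exact ⟨t, ht, hnt⟩
  -- from the failure for h : either ¬h ∈ m or h ≤ ¬h
  have case1 : Le e Θ h (NesTerm.neg h) := by
    obtain ⟨t, ht, hnt⟩ := key h hh
    rcases ht with ht | ht
    · rcases hnt with hnt | hnt
      · exact absurd ⟨t, ht, hnt⟩ hm.prop.2
      · -- t ∈ m, h ≤ ¬t : then t ≤ ¬h so ¬h ∈ m, contradiction
        have : Le e Θ t (NesTerm.neg h) := Le.trans' Le.dni' (Le.contra hnt)
        exact absurd (hm.prop.1 t _ ht this) hnh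
    · rcases hnt with hnt | hnt
      · -- ¬t ∈ m, h ≤ t : ¬t ≤ ¬h so ¬h ∈ m
        exact absurd (hm.prop.1 _ _ hnt (Le.contra ht)) hnh
      · exact Le.self_neg ht hnt
  have case2 : Le e Θ (NesTerm.neg h) h := by
    obtain ⟨t, ht, hnt⟩ := key (NesTerm.neg h) hnh
    rcases ht with ht | ht
    · rcases hnt with hnt | hnt
      · exact absurd ⟨t, ht, hnt⟩ hm.prop.2
      · -- t ∈ m, ¬h ≤ ¬t : t ≤ ¬¬h ≤ ... gives ¬¬h ∈ m, so h ∈ m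
        have h1 : Le e Θ t (NesTerm.neg (NesTerm.neg h)) := Le.trans' Le.dni' (Le.contra hnt)
        have : NesTerm.neg (NesTerm.neg h) ∈ m := hm.prop.1 _ _ ht h1
        exact absurd (hm.prop.1 _ _ this Le.dne') hh
    · rcases hnt with hnt | hnt
      · have : NesTerm.neg (NesTerm.neg h) ∈ m := hm.prop.1 _ _ hnt (Le.contra ht)
        exact absurd (hm.prop.1 _ _ this Le.dne') hh
      · exact Le.trans' (Le.self_neg ht hnt) Le.dne'
  exact not_consistent_of_le case1 case2 hΘ

end NesCompleteness
namespace NesCompleteness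

open NesTerm NesForm

attribute [local instance] Classical.propDecidable

variable {U I : Type}

/-! ### Successor machinery -/

def compat (i : I) (S T : Set (NesTerm U I)) : Prop :=
  ∀ g, NesTerm.know i g ∈ S → g ∈ T

noncomputable def succ (e : Set (NesForm U I)) (S : Set (NesTerm U I)) (i : I) :
    Set (NesTerm U I) :=
  if h : ∃ T, IsPoint e ∅ T ∧ compat i S T then h.choose else ∅

theorem succ_spec {e : Set (NesForm U I)} (hcons : ConsistentIn e (∅ : Set (NesForm U I)))
    {S : Set (NesTerm U I)} (hS : IsPoint e ∅ S) (i : I) :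
    IsPoint e ∅ (succ e S i) ∧ compat i S (succ e S i) := by
  have hex : ∃ T, IsPoint e ∅ T ∧ compat i S T := by
    set B : Set (NesTerm U I) := {t | ∃ g, NesTerm.know i g ∈ S ∧ Le e ∅ g t} with hB
    have hclosed : ClosedLe e ∅ B := by
      rintro a b ⟨g, hg, hga⟩ hab
      exact ⟨g, hg, Le.trans' hga hab⟩
    have hnoclash : ¬ Clash B := by
      rintro ⟨t, ⟨g1, hK1, h1⟩, ⟨g2, hK2, h2⟩⟩
      have hle : Le e ∅ g1 (NesTerm.neg g2) :=
        Le.trans' h1 (Le.trans' Le.dni' (Le.contra h2))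
      have hk : Le e ∅ (NesTerm.know i g1) (NesTerm.know i (NesTerm.neg g2)) :=
        Le.kmono i hle
      have h3 : NesTerm.know i (NesTerm.neg g2) ∈ S := hS.1 _ _ hK1 hk
      have h4 : NesTerm.neg g2 ∈ S := hS.1 _ _ h3 (.tAx i _)
      have h5 : g2 ∈ S := hS.1 _ _ hK2 (.tAx i _)
      exact hS.2.1 ⟨g2, h5, h4⟩
    obtain ⟨T, hBT, hT⟩ := exists_point hcons ⟨hclosed, hnoclash⟩
    exact ⟨T, hT, fun g hg => hBT ⟨g, hg, Le.rfl'⟩⟩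
  rw [succ, dif_pos hex]
  exact ⟨hex.choose_spec.1, hex.choose_spec.2⟩

noncomputable def sigma (e : Set (NesForm U I)) (S : Set (NesTerm U I)) (i : I)
    (j : Set (NesTerm U I)) : Set (NesTerm U I) :=
  if IsPoint e ∅ j ∧ compat i S j then j else succ e S i

theorem sigma_spec {e : Set (NesForm U I)} (hcons : ConsistentIn e (∅ : Set (NesForm U I)))
    {S : Set (NesTerm U I)} (hS : IsPoint e ∅ S) (i : I) (j : Set (NesTerm U I)) :
    IsPoint e ∅ (sigma e S i j) ∧ compat i S (sigma e S i j) := by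
  rw [sigma]
  split
  · next h => exact h
  · exact succ_spec hcons hS i

theorem sigma_eq_of {e : Set (NesForm U I)} {S j : Set (NesTerm U I)} {i : I}
    (hj : IsPoint e ∅ j) (hc : compat i S j) : sigma e S i j = j := if_pos ⟨hj, hc⟩

/-! ### Roots and traces -/

def Dom (Γ : Set (NesForm U I)) : Type :=
  Option {q : NesTerm U I × NesTerm U I // NesForm.ex q.1 q.2 ∈ Γ}

def rootC (e Γ : Set (NesForm U I)) : Dom Γ → Set (NesTerm U I)
  | none => ∅
  | some q => {t | Le e Γ q.val.1 t ∨ Le e Γ q.val.2 t}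

noncomputable def root (e Γ : Set (NesForm U I)) (d : Dom Γ) : Set (NesTerm U I) :=
  if h : ∃ M, rootC e Γ d ⊆ M ∧ IsPoint e Γ M then h.choose else ∅

theorem root_spec {e Γ : Set (NesForm U I)} (hΓ : ConsistentIn e Γ) (d : Dom Γ) :
    rootC e Γ d ⊆ root e Γ d ∧ IsPoint e Γ (root e Γ d) := by
  have hex : ∃ M, rootC e Γ d ⊆ M ∧ IsPoint e Γ M := by
    have hOK : OKSet e Γ (rootC e Γ d) := by
      cases d with
      | none =>
          constructor
          · rintro a b ha _; exact absurd ha (Set.notMem_empty a)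
          · rintro ⟨t, ht, _⟩; exact absurd ht (Set.notMem_empty t)
      | some q =>
          obtain ⟨⟨g1, g2⟩, hq⟩ := q
          constructor
          · rintro a b (ha | ha) hab
            · exact Or.inl (Le.trans' ha hab)
            · exact Or.inr (Le.trans' ha hab)
          · rintro ⟨t, (h1 | h1), (h2 | h2)⟩
            · exact hΓ ⟨.ex g1 g1, .exist (.prem hq),
                show NesDer e Γ (.all g1 (NesTerm.neg g1)) from Le.self_neg h1 h2⟩
            · exact hΓ ⟨.ex g1 g2, .prem hq,
                show NesDer e Γ (.all g1 (NesTerm.neg g2)) from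
                  Le.trans' h1 (Le.trans' Le.dni' (Le.contra h2))⟩
            · exact hΓ ⟨.ex g2 g1, .conv (.prem hq),
                show NesDer e Γ (.all g2 (NesTerm.neg g1)) from
                  Le.trans' h1 (Le.trans' Le.dni' (Le.contra h2))⟩
            · exact hΓ ⟨.ex g2 g2, .exist (.conv (.prem hq)),
                show NesDer e Γ (.all g2 (NesTerm.neg g2)) from Le.self_neg h1 h2⟩
    obtain ⟨M, hM1, hM2⟩ := exists_point hΓ hOK
    exact ⟨M, hM1, hM2⟩
  rw [root, dif_pos hex]
  exact hex.choose_spec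

/-- Worlds: finite sequences of (agent, guess) pairs, grown by prepending. -/
abbrev Wld (U I : Type) : Type := List (I × Set (NesTerm U I))

noncomputable def trace (e Γ : Set (NesForm U I)) (d : Dom Γ) : Wld U I → Set (NesTerm U I)
  | [] => root e Γ d
  | x :: s => sigma e (trace e Γ d s) x.1 x.2

theorem trace_point {e Γ : Set (NesForm U I)} (hΓ : ConsistentIn e Γ) (d : Dom Γ) :
    ∀ s : Wld U I, IsPoint e ∅ (trace e Γ d s) := by
  have hcons : ConsistentIn e (∅ : Set (NesForm U I)) :=
    consistent_mono (Set.empty_subset Γ) hΓ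
  intro s
  induction s with
  | nil => exact (root_spec hΓ d).2.mono
  | cons x s ih => exact (sigma_spec hcons ih x.1 x.2).1

/-! ### The model -/

noncomputable def theModel (e Γ : Set (NesForm U I))
    (R : I → Wld U I → Wld U I → Prop) : NesModel U I where
  W := Wld U I
  R := R
  D := Dom Γ
  dNonempty := ⟨none⟩
  val := fun s A => {d | NesTerm.base A ∈ trace e Γ d s}

theorem truth_lemma {e Γ : Set (NesForm U I)} (hΓ : ConsistentIn e Γ)
    (htv : ∀ φ ∈ e, tvSat φ)
    (R : I → Wld U I → Wld U I → Prop)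
    (H1 : ∀ (i : I) (j : Set (NesTerm U I)) (s : Wld U I), R i s ((i, j) :: s))
    (H2 : ∀ (d : Dom Γ) (i : I) (s t : Wld U I), R i s t →
      ∀ g, NesTerm.know i g ∈ trace e Γ d s → NesTerm.know i g ∈ trace e Γ d t) :
    ∀ (g : NesTerm U I) (d : Dom Γ) (s : Wld U I),
      d ∈ (theModel e Γ R).interp s g ↔ g ∈ trace e Γ d s := by
  have hcons : ConsistentIn e (∅ : Set (NesForm U I)) :=
    consistent_mono (Set.empty_subset Γ) hΓ
  intro g
  induction g with
  | base A => intro d s; exact Iff.rfl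
  | neg g ih =>
      intro d s
      have hP := trace_point hΓ d s
      show d ∈ ((theModel e Γ R).interp s g)ᶜ ↔ _
      exact (not_congr (ih d s)).trans (hP.mem_neg_iff g).symm
  | know i g ih =>
      intro d s
      set S := trace e Γ d s with hSdef
      have hP : IsPoint e ∅ S := trace_point hΓ d s
      constructor
      · intro hK
        by_contra hnotin
        -- construct a successor refuting g
        set B : Set (NesTerm U I) :=
          {t | (∃ g', NesTerm.know i g' ∈ S ∧ Le e ∅ g' t) ∨ Le e ∅ (NesTerm.neg g) t} with hBdef
        have hBclosed : ClosedLe e ∅ B := by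
          rintro a b (⟨g', hg', hga⟩ | ha) hab
          · exact Or.inl ⟨g', hg', Le.trans' hga hab⟩
          · exact Or.inr (Le.trans' ha hab)
        have hBnoclash : ¬ Clash B := by
          rintro ⟨t, (⟨g1, hK1, h1⟩ | h1), (⟨g2, hK2, h2⟩ | h2)⟩
          · have hle : Le e ∅ g1 (NesTerm.neg g2) :=
              Le.trans' h1 (Le.trans' Le.dni' (Le.contra h2))
            have h3 : NesTerm.know i (NesTerm.neg g2) ∈ S := hP.1 _ _ hK1 (Le.kmono i hle)
            have h4 : NesTerm.neg g2 ∈ S := hP.1 _ _ h3 (.tAx i _)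
            have h5 : g2 ∈ S := hP.1 _ _ hK2 (.tAx i _)
            exact hP.2.1 ⟨g2, h5, h4⟩
          · -- g1 ≤ t, ¬g ≤ ¬t : then g1 ≤ g, so K_i g ∈ S, contradiction
            have hle : Le e ∅ g1 g :=
              Le.trans' h1 (Le.trans' Le.dni' (Le.trans' (Le.contra h2) Le.dne'))
            exact hnotin (hP.1 _ _ hK1 (Le.kmono i hle))
          · -- ¬g ≤ t, g2 ≤ ¬t : then g2 ≤ g
            have hle : Le e ∅ g2 g :=
              Le.trans' h2 (Le.trans' (Le.contra h1) Le.dne')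
            exact hnotin (hP.1 _ _ hK2 (Le.kmono i hle))
          · -- ¬g ≤ t and ¬g ≤ ¬t : impossible by boolean soundness
            have hle : Le e ∅ (NesTerm.neg g) (NesTerm.neg (NesTerm.neg g)) :=
              Le.self_neg h1 h2
            have := tv_sound htv hle (by simp)
            have hbool : (!(tv g)) = !(!(tv g)) := this
            cases h' : tv g <;> rw [h'] at hbool <;> simp at hbool
        obtain ⟨T, hBT, hT⟩ := exists_point hcons ⟨hBclosed, hBnoclash⟩
        have hcompat : compat i S T := fun g' hg' => hBT (Or.inl ⟨g', hg', Le.rfl'⟩)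
        have hTeq : trace e Γ d ((i, T) :: s) = T := by
          show sigma e (trace e Γ d s) i T = T
          rw [← hSdef]
          exact sigma_eq_of hT hcompat
        have hgT : g ∉ T := (hT.mem_neg_iff g).mp (hBT (Or.inr Le.rfl'))
        have hmem := hK ((i, T) :: s) (H1 i T s)
        have hmem' := (ih d ((i, T) :: s)).mp hmem
        rw [hTeq] at hmem'
        exact hgT hmem'
      · intro hmem v hRv
        have h2 := H2 d i s v hRv g hmem
        have hPv := trace_point hΓ d v
        exact (ih d v).mpr (hPv.1 _ _ h2 (.tAx i g))

end NesCompleteness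
namespace NesCompleteness

open NesTerm NesForm

attribute [local instance] Classical.propDecidable

variable {U I : Type}

/-! ### The S4 relation -/

def R4 (i : I) (s t : Wld U I) : Prop :=
  ∃ u : Wld U I, (∀ x ∈ u, x.1 = i) ∧ t = u ++ s

theorem R4_H1 (i : I) (j : Set (NesTerm U I)) (s : Wld U I) : R4 i s ((i, j) :: s) :=
  ⟨[(i, j)], by simp, rfl⟩

theorem R4_refl (i : I) : Reflexive (R4 (U := U) i) := fun s => ⟨[], by simp, rfl⟩

theorem R4_trans (i : I) : Transitive (R4 (U := U) i) := by
  rintro a b c ⟨u, hu, rfl⟩ ⟨v, hv, rfl⟩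
  refine ⟨v ++ u, ?_, (List.append_assoc v u a).symm⟩
  intro x hx
  rcases List.mem_append.mp hx with h | h
  · exact hv x h
  · exact hu x h

theorem H2_S4 {e Γ : Set (NesForm U I)} (hΓ : ConsistentIn e Γ) (hS4 : S4Extra U I ⊆ e)
    (d : Dom Γ) (i : I) (u : Wld U I) :
    ∀ s : Wld U I, (∀ x ∈ u, x.1 = i) → ∀ g, NesTerm.know i g ∈ trace e Γ d s →
      NesTerm.know i g ∈ trace e Γ d (u ++ s) := by
  have hcons : ConsistentIn e (∅ : Set (NesForm U I)) :=
    consistent_mono (Set.empty_subset Γ) hΓ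
  induction u with
  | nil => intro s _ g hg; exact hg
  | cons x u ih =>
      intro s hu g hg
      have h1 := ih s (fun y hy => hu y (List.mem_cons_of_mem x hy)) g hg
      have hx : x.1 = i := hu x List.mem_cons_self
      have hP := trace_point hΓ d (u ++ s)
      show NesTerm.know i g ∈ sigma e (trace e Γ d (u ++ s)) x.1 x.2
      rw [hx]
      exact (sigma_spec hcons hP i x.2).2 _
        (hP.1 _ _ h1 (.extraAx (hS4 ⟨i, g, rfl⟩)))

/-! ### The S5 relation -/

noncomputable def strip (i : I) : Wld U I → Wld U I
  | [] => []
  | x :: s => if x.1 = i then strip i s else x :: s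

def R5 (i : I) (s t : Wld U I) : Prop := strip i s = strip i t

theorem R5_equiv (i : I) : Equivalence (R5 (U := U) i) :=
  ⟨fun _ => rfl, Eq.symm, Eq.trans⟩

theorem strip_cons (i : I) (j : Set (NesTerm U I)) (s : Wld U I) :
    strip i ((i, j) :: s) = strip i s := by
  simp [strip]

theorem R5_H1 (i : I) (j : Set (NesTerm U I)) (s : Wld U I) : R5 i s ((i, j) :: s) :=
  (strip_cons i j s).symm

theorem know_sigma_iff {e Γ : Set (NesForm U I)} (hΓ : ConsistentIn e Γ)
    (hS4 : S4Extra U I ⊆ e) (hS5 : S5Extra U I ⊆ e)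
    {S : Set (NesTerm U I)} (hS : IsPoint e ∅ S) (i : I) (j : Set (NesTerm U I))
    (g : NesTerm U I) :
    NesTerm.know i g ∈ sigma e S i j ↔ NesTerm.know i g ∈ S := by
  have hcons : ConsistentIn e (∅ : Set (NesForm U I)) :=
    consistent_mono (Set.empty_subset Γ) hΓ
  have hsig := sigma_spec hcons hS i j
  constructor
  · intro hmem
    by_contra hn
    have hneg : NesTerm.neg (NesTerm.know i g) ∈ S := (hS.mem_neg_iff _).mpr hn
    have h5 : Le e ∅ (NesTerm.neg (NesTerm.know i g))
        (NesTerm.know i (NesTerm.neg (NesTerm.know i g))) :=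
      .extraAx (hS5 (Or.inr ⟨i, g, rfl⟩))
    have h1 : NesTerm.know i (NesTerm.neg (NesTerm.know i g)) ∈ S := hS.1 _ _ hneg h5
    have h2 : NesTerm.neg (NesTerm.know i g) ∈ sigma e S i j := hsig.2 _ h1
    exact ((hsig.1.mem_neg_iff _).mp h2) hmem
  · intro hmem
    exact hsig.2 _ (hS.1 _ _ hmem (.extraAx (hS4 ⟨i, g, rfl⟩)))

theorem know_strip_iff {e Γ : Set (NesForm U I)} (hΓ : ConsistentIn e Γ)
    (hS4 : S4Extra U I ⊆ e) (hS5 : S5Extra U I ⊆ e)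
    (d : Dom Γ) (i : I) (g : NesTerm U I) :
    ∀ s : Wld U I, NesTerm.know i g ∈ trace e Γ d s ↔
      NesTerm.know i g ∈ trace e Γ d (strip i s) := by
  intro s
  induction s with
  | nil => exact Iff.rfl
  | cons x s ih =>
      by_cases hx : x.1 = i
      · have hstrip : strip i (x :: s) = strip i s := by
          show (if x.1 = i then strip i s else x :: s) = strip i s
          rw [if_pos hx]
        rw [hstrip]
        have hP := trace_point hΓ d s
        have : NesTerm.know i g ∈ trace e Γ d (x :: s) ↔
            NesTerm.know i g ∈ trace e Γ d s := by
          show NesTerm.know i g ∈ sigma e (trace e Γ d s) x.1 x.2 ↔ _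
          rw [hx]
          exact know_sigma_iff hΓ hS4 hS5 hP i x.2 g
        exact this.trans ih
      · have hstrip : strip i (x :: s) = x :: s := by
          show (if x.1 = i then strip i s else x :: s) = x :: s
          rw [if_neg hx]
        rw [hstrip]

theorem H2_S5 {e Γ : Set (NesForm U I)} (hΓ : ConsistentIn e Γ)
    (hS4 : S4Extra U I ⊆ e) (hS5 : S5Extra U I ⊆ e)
    (d : Dom Γ) (i : I) (s t : Wld U I) (hR : R5 i s t) (g : NesTerm U I)
    (hg : NesTerm.know i g ∈ trace e Γ d s) : NesTerm.know i g ∈ trace e Γ d t := by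
  have h1 := (know_strip_iff hΓ hS4 hS5 d i g s).mp hg
  rw [hR] at h1
  exact (know_strip_iff hΓ hS4 hS5 d i g t).mpr h1

/-! ### Satisfaction at the root -/

theorem model_sat {e Γ : Set (NesForm U I)} (hΓ : ConsistentIn e Γ)
    (htv : ∀ φ ∈ e, tvSat φ)
    (R : I → Wld U I → Wld U I → Prop)
    (H1 : ∀ (i : I) (j : Set (NesTerm U I)) (s : Wld U I), R i s ((i, j) :: s))
    (H2 : ∀ (d : Dom Γ) (i : I) (s t : Wld U I), R i s t →
      ∀ g, NesTerm.know i g ∈ trace e Γ d s → NesTerm.know i g ∈ trace e Γ d t) :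
    (theModel e Γ R).satSet ([] : Wld U I) Γ := by
  have tl := truth_lemma hΓ htv R H1 H2
  intro φ hφ
  cases φ with
  | all h h' =>
      intro d hd
      have h1 := (tl h d []).mp hd
      have hroot := root_spec hΓ d
      have h2 : h' ∈ trace e Γ d [] := hroot.2.1 _ _ h1 (.prem hφ)
      exact (tl h' d []).mpr h2
  | ex g1 g2 =>
      refine ⟨some ⟨(g1, g2), hφ⟩, ?_, ?_⟩
      · exact (tl g1 _ []).mpr ((root_spec hΓ _).1 (Or.inl Le.rfl'))
      · exact (tl g2 _ []).mpr ((root_spec hΓ _).1 (Or.inr Le.rfl'))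

end NesCompleteness

namespace NesCompleteness

theorem completeness_main (U I : Type) :
    (∀ Γ : Set (NesForm U I), ConsistentIn (S4Extra U I) Γ →
      ∃ (M : NesModel U I) (w : M.W), M.IsS4 ∧ M.satSet w Γ) ∧
    (∀ Γ : Set (NesForm U I), ConsistentIn (S5Extra U I) Γ →
      ∃ (M : NesModel U I) (w : M.W), M.IsS5 ∧ M.satSet w Γ) := by
  constructor
  · intro Γ hΓ
    have htv : ∀ φ ∈ S4Extra U I, tvSat φ := by
      rintro φ ⟨i, g, rfl⟩
      rfl
    refine ⟨theModel (S4Extra U I) Γ R4, ([] : Wld U I),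
      fun i => ⟨R4_refl i, R4_trans i⟩, ?_⟩
    refine model_sat hΓ htv R4 R4_H1 ?_
    rintro d i s t ⟨u, hu, rfl⟩ g hg
    exact H2_S4 hΓ subset_rfl d i u s hu g hg
  · intro Γ hΓ
    have htv : ∀ φ ∈ S5Extra U I, tvSat φ := by
      rintro φ (⟨i, g, rfl⟩ | ⟨i, g, rfl⟩) <;> rfl
    refine ⟨theModel (S5Extra U I) Γ R5, ([] : Wld U I), fun i => R5_equiv i, ?_⟩
    exact model_sat hΓ htv R5 R5_H1
      (fun d i s t hR g hg => H2_S5 hΓ Set.subset_union_left subset_rfl d i s t hR g hg)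

end NesCompleteness

/-- Strong completeness of S4_NES w.r.t. reflexive transitive frames and of S5_NES
w.r.t. frames with equivalence relations: every consistent set is satisfiable in a
pointed S4 (resp. S5) model. -/
theorem s4nes_s5nes_strong_completeness (U I : Type) [Countable U] :
    (∀ Γ : Set (NesForm U I), ConsistentIn (S4Extra U I) Γ →
      ∃ (M : NesModel U I) (w : M.W), M.IsS4 ∧ M.satSet w Γ) ∧
    (∀ Γ : Set (NesForm U I), ConsistentIn (S5Extra U I) Γ →
      ∃ (M : NesModel U I) (w : M.W), M.IsS5 ∧ M.satSet w Γ) := by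
  exact NesCompleteness.completeness_main U I
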